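/- Let 𝒟_1 and 𝒟_2 be sane relativizable complexity classes such that 𝒟_1 is robustly contained in 𝒟_2, and let 𝒞_1, 𝒞_2, 𝒞_3, 𝒞_4 be complexity classes. If P^{𝒞_1:𝒞_2} ⊆ P^{𝒞_3:𝒞_4}, then 𝒟_1^{𝒞_1:𝒞_2} ⊆ 𝒟_2^{𝒞_3:𝒞_4}. -/

import Mathlib

/-!
Common framework: languages over the alphabet `Bool`, polynomial-time
computability via Mathlib's two-stack Turing machines
(`Turing.TM2ComputableInPolyTime`), and query-order classes.
-/

attribute [local instance] Classical.propDecidable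

noncomputable section

/-- A word over the alphabet `{0,1}`. -/
abbrev Word : Type := List Bool

/-- A language is a set of words; a complexity class is a set of languages. -/
abbrev Lang : Type := Set Word

/-- The trivial finite encoding of words over the alphabet `Bool`. -/
def wordEncoding : Computability.Encoding Word Bool where
  encode := id
  decode := fun w => some w
  decode_encode := fun _ => rfl

/-- `f : Word → Word` is computable in deterministic polynomial time. -/
def PolyTime (f : Word → Word) : Prop :=
  Nonempty (Turing.TM2ComputableInPolyTime wordEncoding.encode wordEncoding.encode f)

/-- The membership bit of `w` in the language `A` (the oracle answer). -/
def mbit (A : Lang) (w : Word) : Bool := decide (w ∈ A)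

/-- A standard polynomial-time pairing function on words. -/
def pairW (x y : Word) : Word := (x.flatMap fun b => [b, b]) ++ [false, true] ++ y

/-- The class P of polynomial-time decidable languages. -/
def PClass : Set Lang :=
  {L | ∃ f, PolyTime f ∧ ∀ x, x ∈ L ↔ f x = [true]}

/-- `P^{C:D}` for languages `C`, `D`: languages accepted by a deterministic
polynomial-time machine making at most one query to `C` followed by at most one
query to `D`.  `q₀` computes the first query, `q₁` computes the second query
from the input and the first answer, and `r` decides acceptance from the input
and the two answers. -/
def POrd (C D : Lang) : Set Lang :=
  {L | ∃ q₀ q₁ r, PolyTime q₀ ∧ PolyTime q₁ ∧ PolyTime r ∧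
    ∀ x, x ∈ L ↔
      (let a := mbit C (q₀ x)
       let b := mbit D (q₁ (a :: x))
       r (a :: b :: x) = [true])}

/-- `P^{𝒞:𝒟}` for complexity classes `𝒞`, `𝒟`. -/
def POrdC (𝒞 𝒟 : Set Lang) : Set Lang :=
  {L | ∃ C ∈ 𝒞, ∃ D ∈ 𝒟, L ∈ POrd C D}

/-- `P_{1,1-tt}^{(C,D)}`: one parallel (nonadaptive) query to each of `C` and `D`. -/
def P11tt (C D : Lang) : Set Lang :=
  {L | ∃ qc qd r, PolyTime qc ∧ PolyTime qd ∧ PolyTime r ∧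
    ∀ x, x ∈ L ↔ r (mbit C (qc x) :: mbit D (qd x) :: x) = [true]}

/-- `P_{1,1-tt}^{(𝒞,𝒟)}` for complexity classes. -/
def P11ttC (𝒞 𝒟 : Set Lang) : Set Lang :=
  {L | ∃ C ∈ 𝒞, ∃ D ∈ 𝒟, L ∈ P11tt C D}

/-- `P^{C,D}`: at most one query to each of `C` and `D`, in arbitrary order
(the machine decides, in polynomial time, which oracle to query first). -/
def PAny (C D : Lang) : Set Lang :=
  {L | ∃ ord q₀ q₁ r, PolyTime ord ∧ PolyTime q₀ ∧ PolyTime q₁ ∧ PolyTime r ∧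
    ∀ x, x ∈ L ↔
      (let F := if ord x = [true] then C else D
       let S := if ord x = [true] then D else C
       let a := mbit F (q₀ x)
       let b := mbit S (q₁ (a :: x))
       r (a :: b :: x) = [true])}

/-- `P^{𝒞,𝒟}` for complexity classes. -/
def PAnyC (𝒞 𝒟 : Set Lang) : Set Lang :=
  {L | ∃ C ∈ 𝒞, ∃ D ∈ 𝒟, L ∈ PAny C D}

/-- Disjoint union `A ⊕ B = {x0 | x ∈ A} ∪ {x1 | x ∈ B}`. -/
def dUnion (A B : Lang) : Lang :=
  {w | (∃ x ∈ A, w = x ++ [false]) ∨ (∃ x ∈ B, w = x ++ [true])}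

/-- `𝒞` is closed under disjoint union. -/
def ClosedDU (𝒞 : Set Lang) : Prop :=
  ∀ A ∈ 𝒞, ∀ B ∈ 𝒞, dUnion A B ∈ 𝒞

/-- Polynomial-time many-one reducibility `A ≤_m^p B`. -/
def manyOneP (A B : Lang) : Prop :=
  ∃ f, PolyTime f ∧ ∀ x, x ∈ A ↔ f x ∈ B

/-- `A ≤_m^{p,𝒟[1]} B`: many-one reducibility computed by a polynomial-time
transducer allowed one query to a fixed oracle from `𝒟`. -/
def manyOneP1 (𝒟 : Set Lang) (A B : Lang) : Prop :=
  ∃ D ∈ 𝒟, ∃ q g, PolyTime q ∧ PolyTime g ∧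
    ∀ x, x ∈ A ↔ g (mbit D (q x) :: x) ∈ B

/-- One step of a polynomial-time oracle machine with oracle `A`: the query is
`q` of the current configuration, and `s` computes the next configuration from
the oracle's answer and the current configuration. -/
def oStep (A : Lang) (q s : Word → Word) (c : Word) : Word :=
  s (mbit A (q c) :: c)

/-- `P^A`: languages decidable in deterministic polynomial time with
(polynomially many, adaptive) queries to the oracle `A`, modeled by
polynomially many iterations of a polynomial-time oracle step on
polynomially-bounded configurations. -/
def PRel (A : Lang) : Set Lang :=
  {L | ∃ q s, ∃ p : Polynomial ℕ, PolyTime q ∧ PolyTime s ∧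
    (∀ x : Word, ∀ t ≤ p.eval x.length,
      ((oStep A q s)^[t] x).length ≤ p.eval x.length) ∧
    ∀ x, x ∈ L ↔ (oStep A q s)^[p.eval x.length] x = [true]}

/-- `f ∈ FP^A`: `f` is computable in deterministic polynomial time with
queries to the oracle `A`. -/
def FPRel (A : Lang) (f : Word → Word) : Prop :=
  ∃ q s, ∃ p : Polynomial ℕ, PolyTime q ∧ PolyTime s ∧
    (∀ x : Word, ∀ t ≤ p.eval x.length,
      ((oStep A q s)^[t] x).length ≤ p.eval x.length) ∧
    ∀ x, f x = (oStep A q s)^[p.eval x.length] x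

/-- `NP^A`, via the certificate characterization `NP^A = ∃·P^A`. -/
def NPRel (A : Lang) : Set Lang :=
  {L | ∃ B ∈ PRel A, ∃ p : Polynomial ℕ,
    ∀ x, x ∈ L ↔ ∃ y : Word, y.length ≤ p.eval x.length ∧ pairW x y ∈ B}

/-- The Σ-levels of the polynomial hierarchy: `Σ₀ᵖ = P`, `Σ_{i+1}ᵖ = NP^{Σᵢᵖ}`. -/
def SigmaP : ℕ → Set Lang
  | 0 => PClass
  | (i + 1) => {L | ∃ A ∈ SigmaP i, L ∈ NPRel A}

/-- The Π-levels: `Πᵢᵖ = coΣᵢᵖ`. -/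
def PiP (i : ℕ) : Set Lang := {L | Lᶜ ∈ SigmaP i}

/-- The Δ-levels: `Δ₀ᵖ = P`, `Δ_{i+1}ᵖ = P^{Σᵢᵖ}`. -/
def DeltaP : ℕ → Set Lang
  | 0 => PClass
  | (i + 1) => {L | ∃ A ∈ SigmaP i, L ∈ PRel A}

/-- The polynomial hierarchy `PH = ∪ₙ Σₙᵖ`. -/
def PHclass : Set Lang := ⋃ n, SigmaP n


/-- An (abstract) relativizable complexity class: it assigns to each oracle
language `A` the class `𝒟^{A[1]}` (one query per path), and to each pair of
complexity classes the ordered-query class `𝒟^{𝒞₁:𝒞₂}`. -/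
structure RelClass where
  rel1 : Lang → Set Lang
  relOrd : Set Lang → Set Lang → Set Lang

/-- `𝒟^{𝒞[1]} = ∪_{A ∈ 𝒞} 𝒟^{A[1]}`. -/
def rel1C (𝒟 : RelClass) (𝒞 : Set Lang) : Set Lang := ⋃ A ∈ 𝒞, 𝒟.rel1 A

/-- `𝒟` is sane: `𝒟^{𝒞₁:𝒞₂} = 𝒟^{(P^{𝒞₁:𝒞₂})[1]}` for all classes `𝒞₁`, `𝒞₂`. -/
def Sane (𝒟 : RelClass) : Prop :=
  ∀ 𝒞₁ 𝒞₂ : Set Lang, 𝒟.relOrd 𝒞₁ 𝒞₂ = rel1C 𝒟 (POrdC 𝒞₁ 𝒞₂)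

/-- `𝒟₁` is robustly contained in `𝒟₂`: `𝒟₁^{A[1]} ⊆ 𝒟₂^{A[1]}` for every oracle `A`. -/
def RobustlyContained (𝒟₁ 𝒟₂ : RelClass) : Prop :=
  ∀ A : Lang, 𝒟₁.rel1 A ⊆ 𝒟₂.rel1 A

theorem rel1C_mono (𝒟 : RelClass) {𝒞 𝒞' : Set Lang} (h : 𝒞 ⊆ 𝒞') :
    rel1C 𝒟 𝒞 ⊆ rel1C 𝒟 𝒞' :=
  Set.biUnion_subset_biUnion_left h

theorem RobustlyContained.rel1C_subset {𝒟₁ 𝒟₂ : RelClass} (hrob : RobustlyContained 𝒟₁ 𝒟₂)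
    (𝒞 : Set Lang) : rel1C 𝒟₁ 𝒞 ⊆ rel1C 𝒟₂ 𝒞 :=
  Set.biUnion_mono subset_rfl fun A _ => hrob A

/-- If sane `𝒟₁` is robustly contained in sane `𝒟₂` and `P^{𝒞₁:𝒞₂} ⊆ P^{𝒞₃:𝒞₄}`,
then `𝒟₁^{𝒞₁:𝒞₂} ⊆ 𝒟₂^{𝒞₃:𝒞₄}`. -/
theorem sane_inherits_order_exchange (𝒟₁ 𝒟₂ : RelClass)
    (h₁ : Sane 𝒟₁) (h₂ : Sane 𝒟₂) (hrob : RobustlyContained 𝒟₁ 𝒟₂)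
    (𝒞₁ 𝒞₂ 𝒞₃ 𝒞₄ : Set Lang) (h : POrdC 𝒞₁ 𝒞₂ ⊆ POrdC 𝒞₃ 𝒞₄) :
    𝒟₁.relOrd 𝒞₁ 𝒞₂ ⊆ 𝒟₂.relOrd 𝒞₃ 𝒞₄ := by
  rw [h₁, h₂]
  exact (hrob.rel1C_subset _).trans (rel1C_mono 𝒟₂ h)

end
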